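/- Let γ ∈ (0,1], C > 0 and C̃ > 0. Define C_k = C^k ∏_{l=1}^{k-1} B(lγ/2, γ/2) (empty product equal to 1), and define the sequence (C̃_k) recursively by C̃_1 = C̃ and C̃_{k+1} = (C_k · C̃ + C · C̃_k) · B(kγ/2, γ/2) for k ≥ 1. Then for every T ≥ 0 the series ∑_{k=1}^∞ C̃_k · T^{kγ/2} converges. -/

import Mathlib

open MeasureTheory

/-- The Euler Beta function `B(a,b) = ∫₀¹ u^{a-1}(1-u)^{b-1} du`. -/
noncomputable def Beta (a b : ℝ) : ℝ :=
  ∫ u in (0:ℝ)..1, u ^ (a - 1) * (1 - u) ^ (b - 1)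

/-- The parametrix constants `C_k = C^k ∏_{l=1}^{k-1} B(lγ/2, γ/2)`. -/
noncomputable def Cpar (γ C : ℝ) (k : ℕ) : ℝ :=
  C ^ k * ∏ l ∈ Finset.Icc 1 (k - 1), Beta ((l : ℝ) * γ / 2) (γ / 2)

/-- The sequence `C̃_1 = C̃`, `C̃_{k+1} = (C_k C̃ + C C̃_k) B(kγ/2, γ/2)` (value at `0` is junk). -/
noncomputable def Ctil (γ C Ct : ℝ) : ℕ → ℝ
  | 0 => 0
  | 1 => Ct
  | (k + 2) =>
      (Cpar γ C (k + 1) * Ct + C * Ctil γ C Ct (k + 1)) *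
        Beta (((k : ℝ) + 1) * γ / 2) (γ / 2)


/-!
Unfolding the recursion gives the closed form `C̃_{k+1} = (k+1) C̃ C^k ∏_{l=1}^{k} B(lγ/2, γ/2)`,
so consecutive terms of the series have ratio `(k+2)/(k+1) · C · B((k+1)γ/2, γ/2) · T^{γ/2}`.
By dominated convergence `B(a, b) → 0` as `a → ∞`, so this ratio tends to `0` and the ratio
test applies.
-/

open Filter Topology

lemma summable_of_succ_eq_smul_of_tendsto_zero {𝕜 E : Type*} [NormedField 𝕜]
    [SeminormedAddCommGroup E] [NormedSpace 𝕜 E] [CompleteSpace E] {f : ℕ → E} {q : ℕ → 𝕜}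
    (hf : ∀ n, f (n + 1) = q n • f n) (hq : Tendsto q atTop (𝓝 0)) : Summable f := by
  refine summable_of_ratio_norm_eventually_le (r := 1 / 2) (by norm_num) ?_
  filter_upwards [(tendsto_zero_iff_norm_tendsto_zero.mp hq).eventually_le_const
    (by norm_num : (0 : ℝ) < 1 / 2)] with n hn
  rw [hf, norm_smul]
  exact mul_le_mul_of_nonneg_right hn (norm_nonneg _)

lemma intervalIntegrable_one_sub_rpow {b : ℝ} (hb : 0 < b) :
    IntervalIntegrable (fun u : ℝ => (1 - u) ^ (b - 1)) volume 0 1 := by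
  simpa using (intervalIntegral.intervalIntegrable_rpow' (a := 1) (b := 0)
    (r := b - 1) (by linarith)).comp_sub_left 1

lemma tendsto_Beta_atTop {b : ℝ} (hb : 0 < b) : Tendsto (fun a => Beta a b) atTop (𝓝 0) := by
  have hlim := intervalIntegral.tendsto_integral_filter_of_dominated_convergence
    (μ := volume) (a := 0) (b := 1) (l := atTop) (f := fun _ => (0 : ℝ))
    (F := fun (a : ℝ) u => u ^ (a - 1) * (1 - u) ^ (b - 1)) (fun u => (1 - u) ^ (b - 1))
    (Eventually.of_forall fun a => by fun_prop) ?_ (intervalIntegrable_one_sub_rpow hb) ?_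
  · simpa [Beta] using hlim
  · filter_upwards [eventually_ge_atTop 1] with a ha
    refine Eventually.of_forall fun u hu => ?_
    rw [Set.uIoc_of_le zero_le_one] at hu
    have hu1 : 0 ≤ 1 - u := by linarith [hu.2]
    rw [norm_mul, Real.norm_of_nonneg (Real.rpow_nonneg hu.1.le _),
      Real.norm_of_nonneg (Real.rpow_nonneg hu1 _)]
    exact mul_le_of_le_one_left (Real.rpow_nonneg hu1 _)
      (Real.rpow_le_one hu.1.le hu.2 (by linarith))
  -- the pointwise limit fails at `u = 1` when `b = 1`, hence the exceptional null set
  · filter_upwards [Measure.ae_ne volume 1] with u hu1 hu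
    rw [Set.uIoc_of_le zero_le_one] at hu
    have hpow : Tendsto (fun a : ℝ => u ^ (a - 1)) atTop (𝓝 0) :=
      (tendsto_rpow_atTop_of_base_lt_one u (by linarith [hu.1]) (lt_of_le_of_ne hu.2 hu1)).comp
        (tendsto_atTop_add_const_right atTop (-1) tendsto_id)
    simpa using hpow.mul_const ((1 - u) ^ (b - 1))

lemma Ctil_succ (γ C Ct : ℝ) (k : ℕ) :
    Ctil γ C Ct (k + 1) =
      ((k : ℝ) + 1) * Ct * C ^ k * ∏ l ∈ Finset.Icc 1 k, Beta ((l : ℝ) * γ / 2) (γ / 2) := by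
  induction k with
  | zero => simp [Ctil]
  | succ k ih =>
    rw [Ctil, ih, Cpar, Nat.add_sub_cancel, Finset.prod_Icc_succ_top (Nat.le_add_left 1 k)]
    push_cast
    ring

lemma Ctil_succ_succ (γ C Ct : ℝ) (k : ℕ) :
    Ctil γ C Ct (k + 2) = ((k : ℝ) + 2) / ((k : ℝ) + 1) * C *
      Beta (((k : ℝ) + 1) * γ / 2) (γ / 2) * Ctil γ C Ct (k + 1) := by
  rw [Ctil_succ, Ctil_succ, Finset.prod_Icc_succ_top (Nat.le_add_left 1 k)]
  push_cast
  generalize ∏ l ∈ Finset.Icc 1 k, Beta ((l : ℝ) * γ / 2) (γ / 2) = P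
  field_simp
  ring

lemma summable_abs_Ctil_mul_rpow {γ : ℝ} (hγ : 0 < γ) (C Ct : ℝ) {t : ℝ} (ht : 0 ≤ t) :
    Summable fun k : ℕ => |Ctil γ C Ct (k + 1)| * t ^ (((k : ℝ) + 1) * γ / 2) := by
  have hγ2 : 0 < γ / 2 := half_pos hγ
  refine summable_of_succ_eq_smul_of_tendsto_zero (q := fun k : ℕ => ((k : ℝ) + 2) / ((k : ℝ) + 1)
    * |C| * |Beta (((k : ℝ) + 1) * γ / 2) (γ / 2)| * t ^ (γ / 2)) (fun k => ?_) ?_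
  · have hexp : (((k + 1 : ℕ) : ℝ) + 1) * γ / 2 = ((k : ℝ) + 1) * γ / 2 + γ / 2 := by
      push_cast; ring
    rw [smul_eq_mul, hexp, Real.rpow_add_of_nonneg ht (by positivity) hγ2.le,
      Ctil_succ_succ, abs_mul, abs_mul, abs_mul, abs_of_pos (by positivity : (0 : ℝ) < _ / _)]
    ring
  · have hB : Tendsto (fun k : ℕ => Beta (((k : ℝ) + 1) * γ / 2) (γ / 2)) atTop (𝓝 0) :=
      (tendsto_Beta_atTop hγ2).comp <|
        ((tendsto_natCast_atTop_atTop.atTop_add tendsto_const_nhds).atTop_mul_const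
          hγ).atTop_div_const two_pos
    have hfrac : Tendsto (fun k : ℕ => ((k : ℝ) + 2) / ((k : ℝ) + 1)) atTop (𝓝 1) := by
      simpa [add_comm] using tendsto_add_mul_div_add_mul_atTop_nhds (2 : ℝ) 1 1 one_ne_zero
    simpa using ((hfrac.mul_const |C|).mul hB.abs).mul_const (t ^ (γ / 2))

theorem tilde_parametrix_series_summable_general (γ C Ct : ℝ)
    (hγ : γ ∈ Set.Ioc (0:ℝ) 1) (T : ℝ) :
    Summable (fun k : ℕ => Ctil γ C Ct (k + 1) * T ^ (((k : ℝ) + 1) * γ / 2)) := by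
  refine (summable_abs_Ctil_mul_rpow hγ.1 C Ct (abs_nonneg T)).of_norm_bounded fun k => ?_
  rw [norm_mul, Real.norm_eq_abs]
  exact mul_le_mul_of_nonneg_left (Real.abs_rpow_le_abs_rpow _ _) (abs_nonneg _)

/-- The series `∑_{k≥1} C̃_k T^{kγ/2}` converges. -/
theorem tilde_parametrix_series_summable (γ C Ct : ℝ)
    (hγ : γ ∈ Set.Ioc (0:ℝ) 1) (hC : 0 < C) (hCt : 0 < Ct) (T : ℝ) (hT : 0 ≤ T) :
    Summable (fun k : ℕ => Ctil γ C Ct (k + 1) * T ^ (((k : ℝ) + 1) * γ / 2)) :=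
  tilde_parametrix_series_summable_general γ C Ct hγ T
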